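/- arXiv:1910.02457 — 9 statements merged into one kernel-verified Lean document; each statement's English description precedes it below -/
import Mathlib

section
/- Let S be a commutative semiring in which the multiplicative monoid is a group (a parasemifield). Define a ≤ b iff a = b or there exists c with a + c = b. Then ≤ is a partial order on S that is preserved by addition and multiplication, and a ≤ b implies b⁻¹ ≤ a⁻¹. -/
/-- The canonical (pre-)order on a parasemifield: `a ≤ b` iff `a = b` or `∃ c, a + c = b`. -/
def psfLe {S : Type*} [Add S] (a b : S) : Prop := a = b ∨ ∃ c, a + c = b

/-- A subparasemifield: a nonempty subset closed under addition, multiplication and inverses. -/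
def IsSubPSF {S : Type*} [Add S] [Mul S] [Inv S] (A : Set S) : Prop :=
  A.Nonempty ∧ (∀ a ∈ A, ∀ b ∈ A, a + b ∈ A) ∧ (∀ a ∈ A, ∀ b ∈ A, a * b ∈ A) ∧
    ∀ a ∈ A, a⁻¹ ∈ A

/-- The prime parasemifield: the smallest subparasemifield. -/
def primePSF (S : Type*) [Add S] [Mul S] [Inv S] : Set S := ⋂₀ {A | IsSubPSF A}

/-- `Q_S`: the elements lying below some element of the prime parasemifield. -/
def QS (S : Type*) [Add S] [Mul S] [Inv S] : Set S :=
  {a | ∃ q ∈ primePSF S, psfLe a q}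


private lemma psf_cancel {S : Type*} [AddCommSemigroup S] [CommGroup S]
    (hdist : ∀ a b c : S, a * (b + c) = a * b + a * c)
    {a c d : S} (h : a + (c + d) = a) : a + c = a := by
  set u := c + d with hu
  set w := a * (c * u⁻¹) with hwdef
  have hw : w + c = w := by
    have h1 : (c * u⁻¹) * (a + u) = (c * u⁻¹) * a + (c * u⁻¹) * u := hdist _ _ _
    have h2 : c * u⁻¹ * u = c := by group
    rw [h, h2, mul_comm (c * u⁻¹) a, ← hwdef] at h1
    exact h1.symm
  have ha : a = w + w * (d * c⁻¹) := by
    have h3 : w * (u * c⁻¹) = a := by rw [hwdef]; group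
    have h4 : w * (u * c⁻¹) = w * (c * c⁻¹) + w * (d * c⁻¹) := by
      rw [hu, mul_comm (c + d) c⁻¹, hdist, hdist, mul_comm c⁻¹ c, mul_comm c⁻¹ d]
    rw [h3] at h4
    simpa [mul_inv_cancel] using h4
  calc a + c = (w + w * (d * c⁻¹)) + c := by rw [← ha]
    _ = (w + c) + w * (d * c⁻¹) := by
        rw [add_assoc, add_comm (w * (d * c⁻¹)) c, ← add_assoc]
    _ = w + w * (d * c⁻¹) := by rw [hw]
    _ = a := ha.symm

/-- The canonical relation on a parasemifield is a partial order preserved by addition and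
multiplication, and anti-preserved by inversion. -/
theorem psf_canonical_order {S : Type*} [AddCommSemigroup S] [CommGroup S]
    (hdist : ∀ a b c : S, a * (b + c) = a * b + a * c) :
    (∀ a : S, psfLe a a) ∧
    (∀ a b : S, psfLe a b → psfLe b a → a = b) ∧
    (∀ a b c : S, psfLe a b → psfLe b c → psfLe a c) ∧
    (∀ a b c : S, psfLe a b → psfLe (a + c) (b + c)) ∧
    (∀ a b c : S, psfLe a b → psfLe (a * c) (b * c)) ∧
    (∀ a b : S, psfLe a b → psfLe b⁻¹ a⁻¹) := by
  refine ⟨fun a => Or.inl rfl, ?_, ?_, ?_, ?_, ?_⟩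
  · rintro a b (rfl | ⟨c, rfl⟩) hba
    · rfl
    · rcases hba with h | ⟨d, hd⟩
      · exact h.symm
      · have h : a + (c + d) = a := by rw [← add_assoc]; exact hd
        rw [psf_cancel hdist h]
  · rintro a b c (rfl | ⟨x, rfl⟩) (rfl | ⟨y, rfl⟩)
    · exact Or.inl rfl
    · exact Or.inr ⟨y, rfl⟩
    · exact Or.inr ⟨x, rfl⟩
    · exact Or.inr ⟨x + y, by rw [add_assoc]⟩
  · rintro a b c (rfl | ⟨x, rfl⟩)
    · exact Or.inl rfl
    · exact Or.inr ⟨x, by rw [add_assoc, add_comm c x, ← add_assoc]⟩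
  · rintro a b c (rfl | ⟨x, rfl⟩)
    · exact Or.inl rfl
    · exact Or.inr ⟨x * c, by
        rw [mul_comm (a + x) c, hdist, mul_comm c a, mul_comm c x]⟩
  · rintro a b (rfl | ⟨x, rfl⟩)
    · exact Or.inl rfl
    · refine Or.inr ⟨(a + x)⁻¹ * x * a⁻¹, ?_⟩
      have h2 : ((a + x)⁻¹ * a + (a + x)⁻¹ * x) * a⁻¹
          = (a + x)⁻¹ * a * a⁻¹ + (a + x)⁻¹ * x * a⁻¹ := by
        rw [mul_comm _ a⁻¹, hdist, mul_comm a⁻¹ _, mul_comm a⁻¹ _]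
      calc (a + x)⁻¹ + (a + x)⁻¹ * x * a⁻¹
          = (a + x)⁻¹ * a * a⁻¹ + (a + x)⁻¹ * x * a⁻¹ := by
            rw [show (a + x)⁻¹ * a * a⁻¹ = (a + x)⁻¹ by group]
        _ = ((a + x)⁻¹ * a + (a + x)⁻¹ * x) * a⁻¹ := h2.symm
        _ = ((a + x)⁻¹ * (a + x)) * a⁻¹ := by rw [hdist]
        _ = a⁻¹ := by group
end

section
/- Let S be a commutative parasemifield with prime parasemifield A (the smallest subparasemifield), and let Q_S = {a ∈ S : ∃ q ∈ A, a ≤ q} where ≤ is the canonical order. Then Q_S is a subsemiring of S, and moreover if a + b ∈ Q_S for a, b ∈ S, then both a ∈ Q_S and b ∈ Q_S. -/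
/-- `Q_S` is a subsemiring of a parasemifield `S`, and `a + b ∈ Q_S` implies `a, b ∈ Q_S`. -/
theorem QS_subsemiring {S : Type*} [AddCommSemigroup S] [CommGroup S]
    (hdist : ∀ a b c : S, a * (b + c) = a * b + a * c) :
    (QS S).Nonempty ∧
    (∀ a ∈ QS S, ∀ b ∈ QS S, a + b ∈ QS S) ∧
    (∀ a ∈ QS S, ∀ b ∈ QS S, a * b ∈ QS S) ∧
    (∀ a b : S, a + b ∈ QS S → a ∈ QS S ∧ b ∈ QS S) := by
  have hone : (1 : S) ∈ primePSF S := by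
    intro A hA
    obtain ⟨⟨a, ha⟩, hadd, hmul, hinv⟩ := hA
    have := hmul a ha a⁻¹ (hinv a ha)
    simpa using this
  have hP : ∀ q ∈ primePSF S, ∀ r ∈ primePSF S, q + r ∈ primePSF S := by
    intro q hq r hr A hA
    exact hA.2.1 q (hq A hA) r (hr A hA)
  have hPm : ∀ q ∈ primePSF S, ∀ r ∈ primePSF S, q * r ∈ primePSF S := by
    intro q hq r hr A hA
    exact hA.2.2.1 q (hq A hA) r (hr A hA)
  have hdist' : ∀ a b c : S, (a + b) * c = a * c + b * c := by
    intro a b c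
    rw [mul_comm, hdist, mul_comm c a, mul_comm c b]
  refine ⟨⟨1, 1, hone, Or.inl rfl⟩, ?_, ?_, ?_⟩
  · rintro a ⟨q, hq, ha⟩ b ⟨r, hr, hb⟩
    refine ⟨q + r, hP q hq r hr, ?_⟩
    rcases ha with rfl | ⟨c, rfl⟩ <;> rcases hb with rfl | ⟨d, rfl⟩
    · exact Or.inl rfl
    · exact Or.inr ⟨d, add_assoc a b d⟩
    · exact Or.inr ⟨c, add_right_comm a b c⟩
    · exact Or.inr ⟨c + d, by rw [add_assoc a b, add_assoc a c,
        add_comm c (b + d), add_assoc b d c, add_comm d c]⟩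
  · rintro a ⟨q, hq, ha⟩ b ⟨r, hr, hb⟩
    refine ⟨q * r, hPm q hq r hr, ?_⟩
    rcases ha with rfl | ⟨c, rfl⟩ <;> rcases hb with rfl | ⟨d, rfl⟩
    · exact Or.inl rfl
    · exact Or.inr ⟨a * d, (hdist a b d).symm⟩
    · exact Or.inr ⟨c * b, (hdist' a c b).symm⟩
    · refine Or.inr ⟨a * d + (c * b + c * d), ?_⟩
      rw [hdist' a c (b + d), hdist a b d, hdist c b d, add_assoc]
  · rintro a b ⟨q, hq, h⟩
    rcases h with heq | ⟨c, hc⟩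
    · exact ⟨⟨q, hq, Or.inr ⟨b, heq⟩⟩, ⟨q, hq, Or.inr ⟨a, by rwa [add_comm]⟩⟩⟩
    · refine ⟨⟨q, hq, Or.inr ⟨b + c, by rwa [← add_assoc]⟩⟩,
        ⟨q, hq, Or.inr ⟨a + c, ?_⟩⟩⟩
      rwa [← add_assoc, add_comm b a]
end

section
/- Let S be a commutative parasemifield, A its prime subparasemifield, and Q_S = {a ∈ S : ∃ q ∈ A, a ≤ q}. If a ∈ S and n ∈ ℕ, n ≥ 1, satisfy aⁿ ∈ Q_S, then a ∈ Q_S. -/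
section Aux
variable {S : Type*} [AddCommSemigroup S] [CommGroup S]

/-- Every subparasemifield contains `1`. -/
lemma psf_one_mem {A : Set S} (hA : IsSubPSF A) : (1 : S) ∈ A := by
  obtain ⟨⟨x, hx⟩, -, hmul, hinv⟩ := hA
  have := hmul x hx x⁻¹ (hinv x hx)
  rwa [mul_inv_cancel] at this

/-- The "geometric series" witness: for each `k ≥ 2` there are `w, r` with
`a * w = a ^ k + r` and `p * w = p ^ k + r`. -/
lemma psf_exists_w (hdist : ∀ a b c : S, a * (b + c) = a * b + a * c) :
    ∀ (k : ℕ) (a p : S), ∃ w r : S, a * w = a ^ (k + 2) + r ∧ p * w = p ^ (k + 2) + r := by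
  intro k
  induction k with
  | zero =>
    intro a p
    refine ⟨p + a, a * p, ?_, ?_⟩
    · rw [hdist]
      have : a * a = a ^ 2 := by rw [sq]
      rw [this, add_comm]
    · rw [hdist]
      have : p * p = p ^ 2 := by rw [sq]
      rw [this, mul_comm p a]
  | succ k ih =>
    intro a p
    obtain ⟨w, r, h1, h2⟩ := ih a p
    refine ⟨p ^ (k + 2) + a * w, a * p ^ (k + 2) + a * r, ?_, ?_⟩
    · rw [hdist, h1, hdist, ← pow_succ']
      ac_rfl
    · rw [hdist, mul_comm p (a * w), mul_assoc, mul_comm w p, h2, hdist, ← pow_succ']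

/-- Taking roots of a strict inequality of powers. -/
lemma psf_root (hdist : ∀ a b c : S, a * (b + c) = a * b + a * c)
    {n : ℕ} (hn : 1 ≤ n) {a p v : S} (h : a ^ n + v = p ^ n) : ∃ u, a + u = p := by
  have hd' : ∀ x y z : S, (x + y) * z = x * z + y * z := fun x y z => by
    rw [mul_comm, hdist, mul_comm z x, mul_comm z y]
  match n, hn with
  | 1, _ =>
    refine ⟨v, ?_⟩
    simpa using h
  | (k + 2), _ =>
    obtain ⟨w, r, h1, h2⟩ := psf_exists_w hdist k a p
    have key : a * w + v = p * w := by
      rw [h1, h2, ← h]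
      ac_rfl
    refine ⟨v * w⁻¹, ?_⟩
    calc a + v * w⁻¹ = (a * w + v) * w⁻¹ := by
          rw [hd', mul_assoc, mul_inv_cancel, mul_one]
      _ = (p * w) * w⁻¹ := by rw [key]
      _ = p := by rw [mul_assoc, mul_inv_cancel, mul_one]

end Aux

/-- If `aⁿ ∈ Q_S` for some `n ≥ 1`, then `a ∈ Q_S`. -/
theorem QS_of_pow_mem {S : Type*} [AddCommSemigroup S] [CommGroup S]
    (hdist : ∀ a b c : S, a * (b + c) = a * b + a * c)
    (a : S) (m : ℕ) (hm : 1 ≤ m) (h : a ^ m ∈ QS S) : a ∈ QS S := by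
  have hd' : ∀ x y z : S, (x + y) * z = x * z + y * z := fun x y z => by
    rw [mul_comm, hdist, mul_comm z x, mul_comm z y]
  obtain ⟨q, hq, hle⟩ := h
  -- `q` is strictly below `(1 + q) ^ m`
  have hqp : ∀ n : ℕ, 1 ≤ n → ∃ c : S, q + c = (1 + q) ^ n := by
    intro n hn
    induction n with
    | zero => omega
    | succ n ih =>
      rcases Nat.lt_or_ge 0 n with h1 | h1
      · obtain ⟨c, hc⟩ := ih (by omega)
        refine ⟨q * q + (c + c * q), ?_⟩
        have hstep : (1 + q) ^ (n + 1) = (q + c) * (1 + q) := by rw [pow_succ, hc]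
        rw [hstep, hdist, mul_one, hd']
        ac_rfl
      · refine ⟨1, ?_⟩
        have : n = 0 := by omega
        rw [this, pow_one, add_comm]
  obtain ⟨c, hc⟩ := hqp m hm
  -- get a strict bound `a ^ m + v = (1 + q) ^ m`
  have hv : ∃ v : S, a ^ m + v = (1 + q) ^ m := by
    rcases hle with h1 | ⟨u, hu⟩
    · exact ⟨c, by rw [h1, hc]⟩
    · exact ⟨u + c, by rw [← add_assoc, hu, hc]⟩
  obtain ⟨v, hv⟩ := hv
  obtain ⟨u, hu⟩ := psf_root hdist hm hv
  refine ⟨1 + q, ?_, Or.inr ⟨u, hu⟩⟩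
  intro A hA
  exact hA.2.1 1 (psf_one_mem hA) q (hq A hA)
end

section
/- Let C be a pure submonoid of (ℤⁿ, +), i.e., whenever kα ∈ C for some k ∈ ℕ, k ≥ 1 and α ∈ ℤⁿ, then α ∈ C. Then ℤⁿ ∩ conv(C) = C, where conv(C) is the convex hull of C in ℝⁿ. -/
/-- Canonical embedding of `ℤⁿ` into `ℝⁿ`. -/
def coeR {n : ℕ} (α : Fin n → ℤ) : Fin n → ℝ := fun i => (α i : ℝ)

/-- Convex hull in `ℝⁿ` of a subset of `ℤⁿ`. -/
def convC {n : ℕ} (C : Set (Fin n → ℤ)) : Set (Fin n → ℝ) :=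
  convexHull ℝ (coeR '' C)

/-- The closure `cl(C) = ℤⁿ ∩ topological-closure(conv C)` of a subset of `ℤⁿ`. -/
def intCl {n : ℕ} (C : Set (Fin n → ℤ)) : Set (Fin n → ℤ) :=
  {α | coeR α ∈ closure (convC C)}

/-- `C` is pure: `kα ∈ C` with `k ≥ 1` implies `α ∈ C`. -/
def IsPure {n : ℕ} (C : Set (Fin n → ℤ)) : Prop :=
  ∀ (k : ℕ) (α : Fin n → ℤ), 1 ≤ k → k • α ∈ C → α ∈ C

/-- `C` is a submonoid of `(ℤⁿ, +)` (as a set). -/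
def IsSubmonoidSet {n : ℕ} (C : Set (Fin n → ℤ)) : Prop :=
  (0 : Fin n → ℤ) ∈ C ∧ ∀ a ∈ C, ∀ b ∈ C, a + b ∈ C

/-- `M` is a finitely generated monoid (as a subset of `ℤⁿ`). -/
def IsFGSet {n : ℕ} (M : Set (Fin n → ℤ)) : Prop :=
  ∃ F : Finset (Fin n → ℤ),
    (AddSubmonoid.closure (F : Set (Fin n → ℤ)) : Set (Fin n → ℤ)) = M

/-- `C` is almost prismal: for every real subspace `V ⊆ ℝⁿ`, `cl(C ∩ V)` is finitely generated. -/
def AlmostPrismal {n : ℕ} (C : Set (Fin n → ℤ)) : Prop :=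
  ∀ V : Submodule ℝ (Fin n → ℝ), IsFGSet (intCl {α ∈ C | coeR α ∈ V})

/-- `C` is prismal: pure and almost prismal. -/
def Prismal {n : ℕ} (C : Set (Fin n → ℤ)) : Prop := IsPure C ∧ AlmostPrismal C

/-!
By Carathéodory, an integer point `α` of `conv(C)` is a convex combination with positive weights
of affinely independent points of `C`. Those weights are the unique solution of a linear system
with rational coefficients, hence rational; clearing denominators gives `N • α ∈ C` for some
`N ≥ 1`, and purity gives `α ∈ C`.
-/

def homogenize {R κ : Type*} [One R] (v : κ → R) : Option κ → R := fun o => o.elim 1 v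

theorem homogenize_comp {R S κ : Type*} [Semiring R] [Semiring S] (f : R →+* S) (v : κ → R) :
    f ∘ homogenize v = homogenize (f ∘ v) := by
  funext o; cases o <;> simp [homogenize]

theorem sum_smul_homogenize {k ι κ : Type*} [Ring k] {s : Finset ι} {w : ι → k} {z : ι → κ → k}
    {x : κ → k} (hw : ∑ i ∈ s, w i = 1) (hwz : ∑ i ∈ s, w i • z i = x) :
    ∑ i ∈ s, w i • homogenize (z i) = homogenize x := by
  funext o
  cases o
  · simpa [homogenize, Finset.sum_apply] using hw
  · simp [homogenize, Finset.sum_apply, ← hwz]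

theorem AffineIndependent.linearIndependent_homogenize {k ι κ : Type*} [Ring k] {p : ι → κ → k}
    (hp : AffineIndependent k p) : LinearIndependent k fun i => homogenize (p i) := by
  rw [linearIndependent_iff']
  intro s g hg
  have hsum : ∑ i ∈ s, g i = 0 := by simpa [homogenize, Finset.sum_apply] using congrFun hg none
  have hcomb : ∑ i ∈ s, g i • p i = 0 := by
    funext j; simpa [homogenize, Finset.sum_apply] using congrFun hg (some j)
  exact hp.eq_zero_of_sum_eq_zero hsum hcomb

theorem exists_algebraMap_eq_of_linearIndependent {K L ι κ : Type*} [Field K] [Field L]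
    [Algebra K L] [Fintype ι] [Finite κ] {v : ι → κ → K}
    (hv : LinearIndependent L fun i => algebraMap K L ∘ v i) {w : ι → L} {d : κ → K}
    (h : ∑ i, w i • (algebraMap K L ∘ v i) = algebraMap K L ∘ d) :
    ∃ q : ι → K, ∀ i, algebraMap K L (q i) = w i := by
  have hd : d ∈ Submodule.span K (Set.range v) := by
    -- otherwise `v` extended by `d` would be independent over `K`, hence over `L`
    by_contra hd
    have hvd := linearIndependent_option'.mpr ⟨linearIndependent_algebraMap_comp_iff.mp hv, hd⟩
    rw [← linearIndependent_algebraMap_comp_iff (S := L)] at hvd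
    have : (fun o => algebraMap K L ∘ Option.casesOn' o d v) =
        fun o => Option.casesOn' o (algebraMap K L ∘ d) fun i => algebraMap K L ∘ v i := by
      funext o; cases o <;> rfl
    rw [this, linearIndependent_option'] at hvd
    exact hvd.2 (h ▸ Submodule.sum_mem _ fun i _ =>
      Submodule.smul_mem _ _ (Submodule.subset_span ⟨i, rfl⟩))
  obtain ⟨q, hq⟩ := (Submodule.mem_span_range_iff_exists_fun K).mp hd
  refine ⟨q, Fintype.linearIndependent_iffₛ.mp hv _ _ ?_⟩
  rw [h, ← hq]
  funext j
  simp [Finset.sum_apply, Algebra.smul_def]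

theorem mem_convexHull_of_algebraMap_mem_convexHull {L κ : Type*} [Field L] [LinearOrder L]
    [IsStrictOrderedRing L] [Finite κ] {s : Set (κ → ℚ)} {x : κ → ℚ}
    (hx : algebraMap ℚ L ∘ x ∈ convexHull L ((algebraMap ℚ L ∘ ·) '' s)) :
    x ∈ convexHull ℚ s := by
  obtain ⟨ι, _, z, w, hzs, hz, hw0, hw1, hwz⟩ := eq_pos_convex_span_of_mem_convexHull hx
  choose c hcs hcz using fun i => hzs ⟨i, rfl⟩
  obtain rfl : z = fun i => algebraMap ℚ L ∘ c i := funext fun i => (hcz i).symm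
  obtain ⟨q, hq⟩ := exists_algebraMap_eq_of_linearIndependent (v := fun i => homogenize (c i))
    (by simpa only [homogenize_comp] using hz.linearIndependent_homogenize)
    (d := homogenize x) (by simpa only [homogenize_comp] using sum_smul_homogenize hw1 hwz)
  have hq0 : ∀ i, 0 < q i := fun i => by simpa [← hq] using hw0 i
  have hq1 : ∑ i, q i = 1 := (algebraMap ℚ L).injective (by simpa [hq] using hw1)
  have hqx : ∑ i, q i • c i = x := by
    apply (algebraMap ℚ L).injective.comp_left
    dsimp only
    rw [← hwz]
    funext j
    simp [Finset.sum_apply, ← hq]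
  rw [← hqx]
  exact (convex_convexHull ℚ s).sum_mem (fun i _ => (hq0 i).le) hq1
    fun i _ => subset_convexHull ℚ s (hcs i)

theorem exists_pos_nat_mul_eq_natCast {ι : Type*} [Fintype ι] {q : ι → ℚ} (hq : ∀ i, 0 ≤ q i) :
    ∃ N : ℕ, 0 < N ∧ ∀ i, ∃ p : ℕ, (p : ℚ) = N * q i := by
  refine ⟨∏ i, (q i).den, Finset.prod_pos fun i _ => (q i).den_pos, fun i => ?_⟩
  obtain ⟨m, hm⟩ := Finset.dvd_prod_of_mem (fun i => (q i).den) (Finset.mem_univ i)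
  obtain ⟨k, hk⟩ := Int.eq_ofNat_of_zero_le (Rat.num_nonneg.mpr (hq i))
  refine ⟨k * m, ?_⟩
  rw [hm]
  push_cast
  rw [← Int.cast_natCast k, ← hk, ← Rat.mul_den_eq_num]
  ring

theorem exists_pos_nsmul_mem_closure_of_mem_convexHull {E : Type*} [AddCommGroup E] [Module ℚ E]
    {s : Set E} {x : E} (hx : x ∈ convexHull ℚ s) :
    ∃ N : ℕ, 0 < N ∧ N • x ∈ AddSubmonoid.closure s := by
  obtain ⟨ι, _, w, z, hw0, -, hzs, rfl⟩ := mem_convexHull_iff_exists_fintype.mp hx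
  obtain ⟨N, hN, hp⟩ := exists_pos_nat_mul_eq_natCast hw0
  choose p hp using hp
  have hNx : N • ∑ i, w i • z i = ∑ i, p i • z i := by
    rw [Finset.smul_sum]
    refine Finset.sum_congr rfl fun i _ => ?_
    rw [← Nat.cast_smul_eq_nsmul ℚ, smul_smul, ← hp i, Nat.cast_smul_eq_nsmul]
  exact ⟨N, hN, hNx ▸ AddSubmonoid.sum_mem _ fun i _ =>
    AddSubmonoid.nsmul_mem _ (AddSubmonoid.subset_closure (hzs i)) _⟩

/-- For a pure submonoid `C` of `ℤⁿ` we have `ℤⁿ ∩ conv(C) = C`. -/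
theorem int_inter_convexHull_of_pure {n : ℕ} (C : Set (Fin n → ℤ))
    (hC : IsSubmonoidSet C) (hpure : IsPure C) :
    {α : Fin n → ℤ | coeR α ∈ convC C} = C := by
  refine subset_antisymm (fun α hα => ?_) fun α hα => subset_convexHull ℝ _ ⟨α, hα, rfl⟩
  let castQ : (Fin n → ℤ) →+ (Fin n → ℚ) := (Int.castAddHom ℚ).compLeft (Fin n)
  have hcoeR : ∀ β, coeR β = algebraMap ℚ ℝ ∘ castQ β := fun β => by funext; simp [coeR, castQ]
  have hαQ : castQ α ∈ convexHull ℚ (castQ '' C) := by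
    refine mem_convexHull_of_algebraMap_mem_convexHull (L := ℝ) ?_
    simpa [convC, hcoeR, Set.image_image] using hα
  obtain ⟨N, hN, hNα⟩ := exists_pos_nsmul_mem_closure_of_mem_convexHull hαQ
  rw [← AddMonoidHom.map_mclosure] at hNα
  obtain ⟨β, hβ, hβα⟩ := hNα
  have hβC : β ∈ C := AddSubmonoid.closure_induction (fun _ h => h) hC.1
    (fun _ _ _ _ ha hb => hC.2 _ ha _ hb) hβ
  rw [← map_nsmul] at hβα
  exact hpure N α hN (Int.cast_injective.comp_left hβα ▸ hβC)
end

section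
/- A submonoid C of ℤⁿ is finitely generated if and only if pure(C) = {α ∈ ℤⁿ : ∃ k ≥ 1, kα ∈ C} is finitely generated. -/
/-!
If `F` generates `C` and `k • α = ∑ f g • g`, division with remainder of the coefficients by `k`
writes `α` as an `ℕ`-combination of `F` plus an element `β` of `pure(C)` with
`k • β = ∑ (f g % k) • g`, hence `‖β‖ ≤ ∑ ‖g‖`; there are finitely many such `β`.

Conversely, if `pure(C)` is generated by `G`, then `K • pure(C) ⊆ C` for some `K ≥ 1`. The preimage
`P` of `C` in `ℕ^G` then contains `K • ℕ^G`, so for each residue `r` mod `K` the set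
`{q | r + K • q ∈ P}` is upward closed and, by Dickson's lemma, generated by finitely many minimal
elements.
-/

open Set

namespace AddSubmonoid

theorem nsmul_mem_closure_range_nsmul_single {ι : Type*} [Fintype ι] [DecidableEq ι] (K : ℕ)
    (x : ι → ℕ) : K • x ∈ closure (range fun i => K • Pi.single i 1) := by
  rw [← Finset.univ_sum_single x, Finset.smul_sum]
  refine sum_mem _ fun i _ => ?_
  have : K • Pi.single i (x i) = x i • K • (Pi.single i 1 : ι → ℕ) := by
    ext j; by_cases h : j = i <;> simp [h, mul_comm]
  rw [this]
  exact nsmul_mem (subset_closure (mem_range_self i)) _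

theorem fg_of_forall_nsmul_mem {ι : Type*} [Fintype ι] {P : AddSubmonoid (ι → ℕ)} {K : ℕ}
    (hK : 0 < K) (hP : ∀ x, K • x ∈ P) : P.FG := by
  classical
  set T : (ι → ℕ) → Set (ι → ℕ) := fun r => {q | r + K • q ∈ P}
  set H : Set (ι → ℕ) :=
    (⋃ r ∈ Set.pi univ fun _ => Iio K, (fun q => r + K • q) '' {q | Minimal (· ∈ T r) q}) ∪
      range fun i => K • Pi.single i 1
  have hH : H.Finite := by
    refine .union (.biUnion (.pi fun _ => finite_Iio K) fun r _ => .image _ ?_) (finite_range _)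
    exact WellQuasiOrderedLE.finite_of_isAntichain (setOfPred_minimal_antichain _)
  refine ⟨hH.toFinset, le_antisymm ?_ fun p hp => ?_⟩
  · rw [hH.coe_toFinset, closure_le]
    rintro _ (hx | ⟨i, rfl⟩)
    · obtain ⟨r, -, q, hq, rfl⟩ := mem_iUnion₂.1 hx
      exact hq.prop
    · exact hP _
  set r : ι → ℕ := fun i => p i % K
  set q : ι → ℕ := fun i => p i / K
  have hpq : p = r + K • q := funext fun i => (Nat.mod_add_div (p i) K).symm
  obtain ⟨u, huq, hu⟩ := (isPWO_of_wellQuasiOrderedLE (T r)).exists_le_minimal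
    (show r + K • q ∈ P from hpq ▸ hp)
  have hsplit : p = (r + K • u) + K • (q - u) := by
    rw [hpq, add_assoc, ← smul_add, add_tsub_cancel_of_le huq]
  rw [hsplit, hH.coe_toFinset]
  exact add_mem (subset_closure (.inl (mem_iUnion₂.2 ⟨r, fun i _ => Nat.mod_lt _ hK, u, hu, rfl⟩)))
    (closure_mono subset_union_right (nsmul_mem_closure_range_nsmul_single K _))

section CommMonoid

variable {M : Type*} [AddCommMonoid M]

/-- The saturation `pure(C)` of `C`. -/
def pureHull (C : AddSubmonoid M) : AddSubmonoid M where
  carrier := {x | ∃ k : ℕ, 1 ≤ k ∧ k • x ∈ C}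
  zero_mem' := ⟨1, le_rfl, by simp⟩
  add_mem' := by
    rintro a b ⟨k, hk, ha⟩ ⟨l, hl, hb⟩
    refine ⟨k * l, one_le_mul hk hl, ?_⟩
    rw [smul_add, mul_comm, mul_smul, mul_comm, mul_smul]
    exact add_mem (nsmul_mem ha l) (nsmul_mem hb k)

theorem le_pureHull (C : AddSubmonoid M) : C ≤ C.pureHull :=
  fun x hx => ⟨1, le_rfl, by simpa using hx⟩

theorem exists_nsmul_mem_of_fg_of_le_pureHull {C S : AddSubmonoid M} (hS : S.FG)
    (hSC : S ≤ C.pureHull) : ∃ K : ℕ, 0 < K ∧ ∀ s ∈ S, K • s ∈ C := by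
  obtain ⟨G, rfl⟩ := hS
  choose! k hk hkC using fun g (hg : g ∈ G) => hSC (subset_closure hg)
  refine ⟨∏ g ∈ G, k g, Finset.prod_pos hk, fun s hs => ?_⟩
  suffices closure (G : Set M) ≤ C.comap (nsmulAddMonoidHom (∏ g ∈ G, k g)) from this hs
  refine closure_le.2 fun g hg => ?_
  obtain ⟨m, hm⟩ := Finset.dvd_prod_of_mem k hg
  simpa [hm, mul_comm, mul_smul] using nsmul_mem (hkC g hg) m

theorem fg_of_le_of_forall_nsmul_mem {C S : AddSubmonoid M} (hS : S.FG) (hCS : C ≤ S) {K : ℕ}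
    (hK : 0 < K) (hSC : ∀ s ∈ S, K • s ∈ C) : C.FG := by
  obtain ⟨G, rfl⟩ := hS
  set φ := (Fintype.linearCombination ℕ ((↑) : G → M)).toAddMonoidHom
  have hφ : AddMonoidHom.mrange φ = closure (G : Set M) := by
    have := Fintype.range_linearCombination ℕ ((↑) : G → M)
    rw [Subtype.range_coe] at this
    rw [← Submodule.span_nat_eq_addSubmonoidClosure, ← this]
    rfl
  rw [← map_comap_eq_self (hCS.trans hφ.ge)]
  refine (fg_of_forall_nsmul_mem hK fun x => ?_).map φ
  rw [mem_comap, map_nsmul]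
  exact hSC _ (hφ ▸ AddMonoidHom.mem_mrange.2 ⟨x, rfl⟩)

theorem FG.of_pureHull {C : AddSubmonoid M} (h : C.pureHull.FG) : C.FG := by
  obtain ⟨K, hK, hKC⟩ := exists_nsmul_mem_of_fg_of_le_pureHull h le_rfl
  exact fg_of_le_of_forall_nsmul_mem h (le_pureHull C) hK hKC

end CommMonoid

end AddSubmonoid

section Normed

variable {M : Type*} [NormedAddCommGroup M] [NormSMulClass ℤ M]

theorem norm_le_sum_norm_of_nsmul_eq_sum {F : Finset M} {r : M → ℕ} {k : ℕ} (hk : 0 < k)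
    (hr : ∀ g ∈ F, r g < k) {β : M} (hβ : k • β = ∑ g ∈ F, r g • g) :
    ‖β‖ ≤ ∑ g ∈ F, ‖g‖ := by
  have hnorm : ‖k • β‖ = k * ‖β‖ := by
    rw [← natCast_zsmul, norm_smul, Int.norm_natCast]
  refine le_of_mul_le_mul_left ?_ (Nat.cast_pos.2 hk : (0 : ℝ) < k)
  calc (k : ℝ) * ‖β‖ = ‖∑ g ∈ F, r g • g‖ := by rw [← hβ, hnorm]
    _ ≤ ∑ g ∈ F, r g * ‖g‖ := (norm_sum_le _ _).trans
        (Finset.sum_le_sum fun g _ => norm_nsmul_le)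
    _ ≤ ∑ g ∈ F, k * ‖g‖ := Finset.sum_le_sum fun g hg =>
        mul_le_mul_of_nonneg_right (by exact_mod_cast (hr g hg).le) (norm_nonneg g)
    _ = k * ∑ g ∈ F, ‖g‖ := (Finset.mul_sum ..).symm

variable [ProperSpace M] [DiscreteTopology M]

theorem AddSubmonoid.FG.pureHull {C : AddSubmonoid M} (hC : C.FG) : C.pureHull.FG := by
  obtain ⟨F, rfl⟩ := hC
  set B := ((closure (F : Set M)).pureHull : Set M) ∩ Metric.closedBall 0 (∑ g ∈ F, ‖g‖)
  have hB : B.Finite :=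
    (isCompact_closedBall _ _).finite_of_discrete.subset inter_subset_right
  refine ⟨hB.toFinset, le_antisymm ?_ ?_⟩
  · rw [hB.coe_toFinset, closure_le]
    exact inter_subset_left
  rintro α ⟨k, hk, hkα⟩
  obtain ⟨f, -, hf⟩ := mem_closure_finset.1 hkα
  set β := α - ∑ g ∈ F, (f g / k) • g
  have hkβ : k • β = ∑ g ∈ F, (f g % k) • g := by
    rw [smul_sub, ← hf, Finset.smul_sum, sub_eq_iff_eq_add, ← Finset.sum_add_distrib]
    refine Finset.sum_congr rfl fun g _ => ?_
    rw [smul_smul, ← add_smul, Nat.mod_add_div]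
  have hβ : β ∈ B := by
    refine ⟨⟨k, hk, ?_⟩, mem_closedBall_zero_iff.2 (norm_le_sum_norm_of_nsmul_eq_sum hk
      (fun g _ => Nat.mod_lt _ hk) hkβ)⟩
    rw [hkβ]
    exact _root_.sum_mem fun g hg => nsmul_mem (subset_closure hg) _
  have hF : ∀ g ∈ F, g ∈ B := fun g hg =>
    ⟨le_pureHull _ (subset_closure hg), mem_closedBall_zero_iff.2
      (Finset.single_le_sum (f := (‖·‖)) (fun _ _ => norm_nonneg _) hg)⟩
  rw [hB.coe_toFinset, ← add_sub_cancel (∑ g ∈ F, (f g / k) • g) α]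
  exact add_mem (_root_.sum_mem fun g hg => nsmul_mem (subset_closure (hF g hg)) _)
    (subset_closure hβ)

end Normed

theorem isFGSet_coe_iff {n : ℕ} (P : AddSubmonoid (Fin n → ℤ)) :
    IsFGSet (P : Set (Fin n → ℤ)) ↔ P.FG :=
  exists_congr fun _ => SetLike.coe_set_eq

/-- A submonoid `C` of `ℤⁿ` is finitely generated iff its saturation `pure(C)` is. -/
theorem fg_iff_pure_fg {n : ℕ} (C : Set (Fin n → ℤ)) (hC : IsSubmonoidSet C) :
    IsFGSet C ↔ IsFGSet {α : Fin n → ℤ | ∃ k : ℕ, 1 ≤ k ∧ k • α ∈ C} := by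
  let C' : AddSubmonoid (Fin n → ℤ) :=
    { carrier := C, zero_mem' := hC.1, add_mem' := fun ha hb => hC.2 _ ha _ hb }
  change IsFGSet (C' : Set (Fin n → ℤ)) ↔ IsFGSet (C'.pureHull : Set (Fin n → ℤ))
  rw [isFGSet_coe_iff, isFGSet_coe_iff]
  exact ⟨AddSubmonoid.FG.pureHull, AddSubmonoid.FG.of_pureHull⟩
end

section
/- Let C, D ⊆ ℤⁿ be pure submonoids and V ⊆ ℝⁿ a vector subspace. Let W = span(C ∩ D ∩ V). Then cl((C ∩ D) ∩ V) = cl(C ∩ W) ∩ cl(D ∩ W), where cl(M) := ℤⁿ ∩ topological-closure(conv(M)). -/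
/-!
Pick a linearly independent family `σ` in `C ∩ D ∩ V` spanning `W`. If `α ∈ cl(C ∩ W)`, then `α`
is a limit of nonnegative rational combinations `y` of points of `C ∩ W`. For `y` close to `α`,
the error `α - y` is a rational vector of `W`, so its coordinates in the basis `σ` are rational,
and they are small, hence `> -1`. Then `α + ∑ σ` is a nonnegative rational combination of points
of `C`, and purity puts it in `C`. Doing this for `kα` and for `D` as well gives
`kα + ∑ σ ∈ C ∩ D ∩ V` for all `k ≥ 1`, and `α + k⁻¹ ∑ σ ∈ conv(C ∩ D ∩ V)` tends to `α`.
-/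

open Set Submodule Topology Filter
open scoped NNRat

theorem Ici_zero_subset_closure_range_nnratCast :
    Ici (0 : ℝ) ⊆ closure (range ((↑) : ℚ≥0 → ℝ)) := by
  have hpos : Ioi (0 : ℝ) ⊆ closure (range ((↑) : ℚ≥0 → ℝ)) := fun r hr =>
    closure_mono (by
      rintro _ ⟨hq, q, rfl⟩
      exact ⟨q.toNNRat, by
        rw [← Rat.cast_nnratCast, Rat.coe_toNNRat _ ((Rat.cast_pos (K := ℝ)).1 hq).le]⟩)
      (Rat.denseRange_cast.open_subset_closure_inter isOpen_Ioi hr)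
  exact closure_Ioi (0 : ℝ) ▸ closure_minimal hpos isClosed_closure

theorem closure_convexHull_subset_closure_span_nnrat {E : Type*} [AddCommGroup E] [Module ℝ E]
    [Module ℚ≥0 E] [IsScalarTower ℚ≥0 ℝ E] [TopologicalSpace E] [IsTopologicalAddGroup E]
    [ContinuousSMul ℝ E] (s : Set E) :
    closure (convexHull ℝ s) ⊆ closure (span ℚ≥0 s) := by
  set T := closure (span ℚ≥0 s : Set E)
  have hadd : ∀ x ∈ T, ∀ y ∈ T, x + y ∈ T := fun x hx y hy =>
    map_mem_closure₂ continuous_add hx hy fun _ ha _ hb => add_mem ha hb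
  have hsmul : ∀ r : ℝ, 0 ≤ r → ∀ x ∈ T, r • x ∈ T := by
    intro r hr x hx
    refine map_mem_closure₂ continuous_smul (Ici_zero_subset_closure_range_nnratCast hr) hx ?_
    rintro _ ⟨q, rfl⟩ y hy
    rw [NNRat.cast_smul_eq_nnqsmul]
    exact smul_mem _ q hy
  have hconv : Convex ℝ T := fun x hx y hy a b ha hb _ =>
    hadd _ (hsmul a ha x hx) _ (hsmul b hb y hy)
  exact closure_minimal (convexHull_min (subset_span.trans subset_closure) hconv) isClosed_closure

theorem mem_closure_convexHull_of_nsmul_add_mem {E : Type*} [AddCommGroup E] [Module ℝ E]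
    [TopologicalSpace E] [IsTopologicalAddGroup E] [ContinuousSMul ℝ E] {s : Set E} {x y : E}
    (h0 : 0 ∈ s) (h : ∀ k : ℕ, 1 ≤ k → k • x + y ∈ s) : x ∈ closure (convexHull ℝ s) := by
  have hmem : ∀ᶠ k : ℕ in atTop, x + (k : ℝ)⁻¹ • y ∈ convexHull ℝ s := by
    refine eventually_atTop.2 ⟨1, fun k hk => ?_⟩
    have hk' : (1 : ℝ) ≤ k := by exact_mod_cast hk
    have := (convex_convexHull ℝ s).smul_mem_of_zero_mem (subset_convexHull ℝ s h0)
      (subset_convexHull ℝ s (h k hk)) ⟨by positivity, inv_le_one_of_one_le₀ hk'⟩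
    rwa [smul_add, ← Nat.cast_smul_eq_nsmul ℝ, smul_smul, inv_mul_cancel₀ (by positivity),
      one_smul] at this
  have hlim : Tendsto (fun k : ℕ => x + (k : ℝ)⁻¹ • y) atTop (𝓝 x) := by
    simpa using tendsto_const_nhds.add ((tendsto_inv_atTop_nhds_zero_nat (𝕜 := ℝ)).smul_const y)
  exact mem_closure_of_tendsto hlim hmem

theorem mem_span_of_algebraMap_comp_mem_span {K L J ι : Type*} [Field K] [Field L] [Algebra K L]
    [Fintype J] [DecidableEq J] (v : ι → J → K) {x : J → K}
    (hx : algebraMap K L ∘ x ∈ span L (range fun i => algebraMap K L ∘ v i)) :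
    x ∈ span K (range v) := by
  by_contra hxv
  obtain ⟨f, hfx, hf⟩ := (span K (range v)).exists_dual_map_eq_bot_of_notMem hxv inferInstance
  -- the extension of `f` to `J → L` with the same coefficients
  let g : (J → L) →ₗ[L] L := ∑ j, algebraMap K L (f (Pi.single j 1)) • LinearMap.proj j
  have hg : ∀ y : J → K, g (algebraMap K L ∘ y) = algebraMap K L (f y) := by
    intro y
    have hsingle : ∀ i : J, (fun j => if i = j then (1 : K) else 0) = Pi.single i 1 :=
      fun i => funext fun j => by simp [Pi.single_apply, eq_comm]
    rw [f.pi_apply_eq_sum_univ y]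
    simp [g, hsingle, Algebra.smul_def, mul_comm]
  have hker : span L (range fun i => algebraMap K L ∘ v i) ≤ LinearMap.ker g := by
    refine span_le.2 ?_
    rintro _ ⟨i, rfl⟩
    have : f (v i) = 0 := (Submodule.eq_bot_iff _).1 hf _ (mem_map_of_mem (subset_span ⟨i, rfl⟩))
    simp [hg, this]
  exact hfx (by simpa [hg] using hker hx)

theorem LinearIndependent.eventually_add_sum_mem_span_nnrat {E ι : Type*} [NormedAddCommGroup E]
    [NormedSpace ℝ E] [FiniteDimensional ℝ E] [Module ℚ E] [IsScalarTower ℚ ℝ E] [Module ℚ≥0 E]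
    [IsScalarTower ℚ≥0 ℚ E] [Fintype ι] {v : ι → E} (hv : LinearIndependent ℝ v) :
    ∀ᶠ e in 𝓝 (0 : E), e ∈ span ℚ (range v) → e + ∑ i, v i ∈ span ℚ≥0 (range v) := by
  obtain ⟨P, hP⟩ := LinearMap.exists_leftInverse_of_injective (Fintype.linearCombination ℝ v)
    (LinearMap.ker_eq_bot.2 (linearIndependent_iff_injective_fintypeLinearCombination.1 hv))
  have hPc : Continuous P := LinearMap.continuous_of_finiteDimensional P
  have hU : ∀ᶠ e in 𝓝 (0 : E), ∀ i, -1 < P e i := eventually_all.2 fun i =>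
    (((continuous_apply i).comp hPc).tendsto' 0 0 (by simp)).eventually_const_lt (by norm_num)
  filter_upwards [hU] with e he heQ
  obtain ⟨μ, rfl⟩ := (mem_span_range_iff_exists_fun ℚ).1 heQ
  have hPμ : P (∑ i, μ i • v i) = fun i => (μ i : ℝ) := by
    simpa [Fintype.linearCombination_apply, Rat.cast_smul_eq_qsmul] using
      LinearMap.congr_fun hP (fun i => (μ i : ℝ))
  have hμ : ∀ i, 0 ≤ 1 + μ i := fun i => by
    have : (-1 : ℝ) < μ i := by simpa [hPμ] using he i
    exact (neg_lt_iff_pos_add'.1 (by exact_mod_cast this)).le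
  rw [← Finset.sum_add_distrib]
  refine sum_mem fun i _ => ?_
  have : μ i • v i + v i = (1 + μ i).toNNRat • v i := by
    rw [← NNRat.cast_smul_eq_nnqsmul ℚ, Rat.coe_toNNRat _ (hμ i), add_smul, one_smul, add_comm]
  rw [this]
  exact smul_mem _ _ (subset_span (mem_range_self i))

section Lattice

variable {n : ℕ}

theorem coeR_injective : Function.Injective (coeR (n := n)) := fun _ _ h =>
  funext fun i => by simpa [coeR] using congrFun h i

@[simp] theorem coeR_zero : coeR (0 : Fin n → ℤ) = 0 := by
  funext; simp [coeR]

@[simp] theorem coeR_add (a b : Fin n → ℤ) : coeR (a + b) = coeR a + coeR b := by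
  funext; simp [coeR]

@[simp] theorem coeR_nsmul (k : ℕ) (a : Fin n → ℤ) : coeR (k • a) = k • coeR a := by
  funext; simp [coeR]

@[simp] theorem coeR_sum {ι : Type*} (s : Finset ι) (a : ι → Fin n → ℤ) :
    coeR (∑ i ∈ s, a i) = ∑ i ∈ s, coeR (a i) := by
  funext; simp [coeR, Finset.sum_apply]

theorem intCl_mono {A B : Set (Fin n → ℤ)} (h : A ⊆ B) : intCl A ⊆ intCl B :=
  fun _ hα => closure_mono (convexHull_mono (image_mono h)) hα

theorem coeR_mem_of_mem_intCl {C : Set (Fin n → ℤ)} {W : Submodule ℝ (Fin n → ℝ)} {α : Fin n → ℤ}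
    (hα : α ∈ intCl {β ∈ C | coeR β ∈ W}) : coeR α ∈ W :=
  closure_minimal (convexHull_min (image_subset_iff.2 fun _ hβ => hβ.2) W.convex)
    W.closed_of_finiteDimensional hα

theorem mem_span_rat_of_mem_span_real {ι : Type*} (σ : ι → Fin n → ℤ) {x : Fin n → ℝ}
    (hxQ : x ∈ span ℚ (range coeR)) (hx : x ∈ span ℝ (range (coeR ∘ σ))) :
    x ∈ span ℚ (range (coeR ∘ σ)) := by
  let castQ : (Fin n → ℚ) →ₗ[ℚ] (Fin n → ℝ) := (Algebra.linearMap ℚ ℝ).compLeft (Fin n)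
  have hcoeR : ∀ a : Fin n → ℤ, coeR a = castQ (Int.cast ∘ a) := fun a => by
    funext; simp [castQ, coeR]
  obtain ⟨r, rfl⟩ : x ∈ LinearMap.range castQ :=
    span_le.2 (by rintro _ ⟨a, rfl⟩; exact ⟨_, (hcoeR a).symm⟩) hxQ
  have hσ : coeR ∘ σ = fun i => algebraMap ℚ ℝ ∘ (Int.cast ∘ σ i) := by
    funext i j; simp [coeR]
  rw [hσ] at hx ⊢
  have hr := mem_span_of_algebraMap_comp_mem_span (fun i => (Int.cast ∘ σ i : Fin n → ℚ)) hx
  have := mem_map_of_mem (f := castQ) hr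
  rwa [map_span, ← range_comp] at this

def IsSubmonoidSet.toAddSubmonoid {C : Set (Fin n → ℤ)} (hC : IsSubmonoidSet C) :
    AddSubmonoid (Fin n → ℤ) where
  carrier := C
  zero_mem' := hC.1
  add_mem' ha hb := hC.2 _ ha _ hb

theorem IsSubmonoidSet.exists_nsmul_eq_coeR_of_mem_span {C : Set (Fin n → ℤ)}
    (hC : IsSubmonoidSet C) {x : Fin n → ℝ} (hx : x ∈ span ℚ≥0 (coeR '' C)) :
    ∃ N : ℕ, 0 < N ∧ ∃ c ∈ C, N • x = coeR c := by
  induction hx using Submodule.span_induction with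
  | mem x hx =>
    obtain ⟨c, hc, rfl⟩ := hx
    exact ⟨1, one_pos, c, hc, one_smul _ _⟩
  | zero => exact ⟨1, one_pos, 0, hC.1, by simp⟩
  | add x y _ _ hx hy =>
    obtain ⟨N, hN, c, hc, hxc⟩ := hx
    obtain ⟨M, hM, d, hd, hyd⟩ := hy
    refine ⟨N * M, mul_pos hN hM, M • c + N • d,
      hC.2 _ (hC.toAddSubmonoid.nsmul_mem hc M) _ (hC.toAddSubmonoid.nsmul_mem hd N), ?_⟩
    rw [coeR_add, coeR_nsmul, coeR_nsmul, ← hxc, ← hyd, smul_add, smul_smul, smul_smul, mul_comm M]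
  | smul q x _ hx =>
    obtain ⟨N, hN, c, hc, hxc⟩ := hx
    refine ⟨q.den * N, mul_pos q.den_pos hN, q.num • c, hC.toAddSubmonoid.nsmul_mem hc _, ?_⟩
    calc (q.den * N) • q • x = N • (q.den • q) • x := by rw [mul_comm, mul_smul, smul_assoc]
      _ = q.num • N • x := by
        rw [show q.den • q = q.num by rw [nsmul_eq_mul, NNRat.den_mul_eq_num],
          Nat.cast_smul_eq_nsmul, smul_comm]
      _ = coeR (q.num • c) := by rw [hxc, coeR_nsmul]

theorem IsPure.mem_of_coeR_mem_span {C : Set (Fin n → ℤ)} (hpC : IsPure C) (hC : IsSubmonoidSet C)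
    {α : Fin n → ℤ} (hα : coeR α ∈ span ℚ≥0 (coeR '' C)) : α ∈ C := by
  obtain ⟨N, hN, c, hc, hNc⟩ := hC.exists_nsmul_eq_coeR_of_mem_span hα
  rw [← coeR_nsmul] at hNc
  exact hpC N α hN (coeR_injective hNc ▸ hc)

theorem IsPure.add_sum_mem_of_mem_closure_span {C A : Set (Fin n → ℤ)} (hpC : IsPure C)
    (hC : IsSubmonoidSet C) (hAC : A ⊆ C) {ι : Type*} [Fintype ι] {σ : ι → Fin n → ℤ}
    (hσC : ∀ i, σ i ∈ C) (hσ : LinearIndependent ℝ (coeR ∘ σ))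
    (hAσ : coeR '' A ⊆ span ℝ (range (coeR ∘ σ))) {α : Fin n → ℤ}
    (hα : coeR α ∈ closure (span ℚ≥0 (coeR '' A) : Set (Fin n → ℝ))) :
    α + ∑ i, σ i ∈ C := by
  have hnhds : (coeR α - ·) ⁻¹' {e | e ∈ span ℚ (range (coeR ∘ σ)) →
      e + ∑ i, coeR (σ i) ∈ span ℚ≥0 (range (coeR ∘ σ))} ∈ 𝓝 (coeR α) :=
    ((continuous_const.sub continuous_id).tendsto' _ _ (sub_self _)).eventually
      hσ.eventually_add_sum_mem_span_nnrat
  obtain ⟨y, hyα, hy⟩ := mem_closure_iff_nhds.1 hα _ hnhds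
  have hAW : span ℚ≥0 (coeR '' A) ≤ (span ℝ (range (coeR ∘ σ))).restrictScalars ℚ≥0 :=
    span_le.2 hAσ
  have hAQ : span ℚ≥0 (coeR '' A) ≤ (span ℚ (range coeR)).restrictScalars ℚ≥0 :=
    span_le.2 ((image_subset_range _ _).trans subset_span)
  have hαy : coeR α - y ∈ span ℚ (range (coeR ∘ σ)) := mem_span_rat_of_mem_span_real σ
    (sub_mem (subset_span (mem_range_self α)) (hAQ hy))
    (sub_mem (closure_minimal hAW (span ℝ _).closed_of_finiteDimensional hα) (hAW hy))
  apply hpC.mem_of_coeR_mem_span hC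
  rw [show coeR (α + ∑ i, σ i) = y + (coeR α - y + ∑ i, coeR (σ i)) by
    rw [coeR_add, coeR_sum]; abel]
  exact add_mem (span_mono (image_mono hAC) hy)
    (span_mono (range_subset_iff.2 fun i => mem_image_of_mem _ (hσC i)) (hyα hαy))

theorem IsPure.nsmul_add_sum_mem_of_mem_intCl {C : Set (Fin n → ℤ)} (hpC : IsPure C)
    (hC : IsSubmonoidSet C) {ι : Type*} [Fintype ι] {σ : ι → Fin n → ℤ} (hσC : ∀ i, σ i ∈ C)
    (hσ : LinearIndependent ℝ (coeR ∘ σ)) {α : Fin n → ℤ}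
    (hα : α ∈ intCl {β ∈ C | coeR β ∈ span ℝ (range (coeR ∘ σ))}) (k : ℕ) :
    k • α + ∑ i, σ i ∈ C := by
  refine hpC.add_sum_mem_of_mem_closure_span (A := {β ∈ C | coeR β ∈ span ℝ (range (coeR ∘ σ))})
    hC (fun _ hβ => hβ.1) hσC hσ (image_subset_iff.2 fun _ hβ => hβ.2) ?_
  rw [coeR_nsmul]
  exact map_mem_closure (continuous_const_smul k)
    (closure_convexHull_subset_closure_span_nnrat _ hα) fun _ hx => nsmul_mem hx k

theorem exists_linearIndependent_coeR (S : Set (Fin n → ℤ)) :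
    ∃ (ι : Type) (_ : Fintype ι) (σ : ι → Fin n → ℤ), (∀ i, σ i ∈ S) ∧
      LinearIndependent ℝ (coeR ∘ σ) ∧ span ℝ (range (coeR ∘ σ)) = span ℝ (coeR '' S) := by
  obtain ⟨ι, a, -, hspan, hσ⟩ := exists_linearIndependent' ℝ (coeR ∘ ((↑) : S → Fin n → ℤ))
  have : Finite ι := hσ.finite
  refine ⟨ι, Fintype.ofFinite ι, fun i => a i, fun i => (a i).2, hσ, ?_⟩
  rw [show coeR ∘ (fun i => (a i : Fin n → ℤ)) = (coeR ∘ (↑)) ∘ a from rfl, hspan, range_comp,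
    Subtype.range_coe]

end Lattice

/-- For pure submonoids `C, D ⊆ ℤⁿ` and a subspace `V ⊆ ℝⁿ`, with
`W = span(C ∩ D ∩ V)`: `cl((C ∩ D) ∩ V) = cl(C ∩ W) ∩ cl(D ∩ W)`. -/
theorem closure_inter_eq {n : ℕ} (C D : Set (Fin n → ℤ))
    (hC : IsSubmonoidSet C) (hD : IsSubmonoidSet D)
    (hpC : IsPure C) (hpD : IsPure D)
    (V : Submodule ℝ (Fin n → ℝ))
    (W : Submodule ℝ (Fin n → ℝ))
    (hW : W = Submodule.span ℝ (coeR '' {α ∈ C ∩ D | coeR α ∈ V})) :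
    intCl {α ∈ C ∩ D | coeR α ∈ V} =
      intCl {α ∈ C | coeR α ∈ W} ∩ intCl {α ∈ D | coeR α ∈ W} := by
  subst hW
  set S := {α ∈ C ∩ D | coeR α ∈ V}
  refine Subset.antisymm (subset_inter
    (intCl_mono fun α hα => ⟨hα.1.1, subset_span (mem_image_of_mem _ hα)⟩)
    (intCl_mono fun α hα => ⟨hα.1.2, subset_span (mem_image_of_mem _ hα)⟩)) ?_
  rintro α ⟨hαC, hαD⟩
  obtain ⟨ι, _, σ, hσS, hσ, hσspan⟩ := exists_linearIndependent_coeR S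
  rw [← hσspan] at hαC hαD
  have hWV : span ℝ (range (coeR ∘ σ)) ≤ V := span_le.2 (range_subset_iff.2 fun i => (hσS i).2)
  have hαW := coeR_mem_of_mem_intCl hαC
  have hmem : ∀ k : ℕ, k • α + ∑ i, σ i ∈ S := fun k => by
    refine ⟨⟨hpC.nsmul_add_sum_mem_of_mem_intCl hC (fun i => (hσS i).1.1) hσ hαC k,
      hpD.nsmul_add_sum_mem_of_mem_intCl hD (fun i => (hσS i).1.2) hσ hαD k⟩, hWV ?_⟩
    rw [coeR_add, coeR_nsmul, coeR_sum]
    exact add_mem (nsmul_mem hαW k) (sum_mem fun i _ => subset_span (mem_range_self i))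
  show coeR α ∈ closure (convexHull ℝ (coeR '' S))
  exact mem_closure_convexHull_of_nsmul_add_mem ⟨0, ⟨⟨hC.1, hD.1⟩, by simp⟩, coeR_zero⟩
    fun k _ => ⟨_, hmem k, by rw [coeR_add, coeR_nsmul]⟩
end

section
/- Let S be a commutative parasemifield. Define x ∼ y iff xy⁻¹ ∈ Q_S and yx⁻¹ ∈ Q_S. Then ∼ is a semiring congruence on S, the quotient S/∼ is an additively idempotent parasemifield, and any semiring homomorphism from S to an additively idempotent parasemifield factors through S/∼. -/
/-- The relation `x ∼ y ↔ xy⁻¹ ∈ Q_S ∧ yx⁻¹ ∈ Q_S`. -/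
def psfRel {S : Type*} [Add S] [Mul S] [Inv S] (x y : S) : Prop :=
  x * y⁻¹ ∈ QS S ∧ y * x⁻¹ ∈ QS S

/-!
Ratios lying in `primePSF S` are identified, and `Q_S` is closed under multiplication, which gives
transitivity. If `x ≤ q y` with `q` prime then `x + a ≤ (q + 1)(y + a)`, which gives additivity;
`x + x = (1 + 1) x` with `1 + 1` prime gives idempotency. A homomorphism `φ` into an additively
idempotent parasemifield kills the prime parasemifield, hence sends `x * y⁻¹ ∈ Q_S` to
`φ x ≤ φ y`, and the canonical order of an idempotent semiring is antisymmetric.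
-/

section Order

variable {S : Type*} [AddCommSemigroup S]

lemma psfLe.trans {a b c : S} (hab : psfLe a b) (hbc : psfLe b c) : psfLe a c := by
  rcases hab with rfl | ⟨d, rfl⟩
  · exact hbc
  · rcases hbc with rfl | ⟨e, rfl⟩
    · exact Or.inr ⟨d, rfl⟩
    · exact Or.inr ⟨d + e, (add_assoc a d e).symm⟩

lemma psfLe_add_self (a c : S) : psfLe a (a + c) := Or.inr ⟨c, rfl⟩

lemma psfLe.add_right {a b : S} (h : psfLe a b) (c : S) : psfLe (a + c) (b + c) := by
  rcases h with rfl | ⟨d, rfl⟩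
  · exact Or.inl rfl
  · exact Or.inr ⟨d, add_right_comm a c d⟩

lemma psfLe.map {T : Type*} [AddCommSemigroup T] {φ : S → T}
    (hadd : ∀ a b : S, φ (a + b) = φ a + φ b) {a b : S} (h : psfLe a b) : psfLe (φ a) (φ b) := by
  rcases h with rfl | ⟨c, rfl⟩
  · exact Or.inl rfl
  · exact Or.inr ⟨φ c, (hadd a c).symm⟩

lemma psfLe.add_eq_of_idem (hid : ∀ t : S, t + t = t) {a b : S} (h : psfLe a b) : a + b = b := by
  rcases h with rfl | ⟨c, rfl⟩
  · exact hid a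
  · rw [← add_assoc, hid]

lemma psfLe.antisymm_of_idem (hid : ∀ t : S, t + t = t) {a b : S} (hab : psfLe a b)
    (hba : psfLe b a) : a = b :=
  calc a = b + a := (hba.add_eq_of_idem hid).symm
    _ = a + b := add_comm b a
    _ = b := hab.add_eq_of_idem hid

variable [CommGroup S]

lemma psfLe.mul_right (hdist : ∀ a b c : S, a * (b + c) = a * b + a * c)
    {a b : S} (h : psfLe a b) (c : S) : psfLe (a * c) (b * c) := by
  rcases h with rfl | ⟨d, rfl⟩
  · exact Or.inl rfl
  · exact Or.inr ⟨d * c, by rw [mul_comm (a + d), hdist, mul_comm c a, mul_comm c d]⟩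

lemma psfLe_mul_of_mul_inv_psfLe (hdist : ∀ a b c : S, a * (b + c) = a * b + a * c)
    {a b q : S} (h : psfLe (a * b⁻¹) q) : psfLe a (q * b) := by
  simpa using h.mul_right hdist b

end Order

section Prime

variable {S : Type*} [AddCommSemigroup S] [CommGroup S]

lemma one_mem_primePSF : (1 : S) ∈ primePSF S := by
  rintro A ⟨⟨a, ha⟩, -, hmul, hinv⟩
  simpa using hmul a ha a⁻¹ (hinv a ha)

lemma add_mem_primePSF {q r : S} (hq : q ∈ primePSF S) (hr : r ∈ primePSF S) :
    q + r ∈ primePSF S := fun A hA => hA.2.1 q (hq A hA) r (hr A hA)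

lemma mul_mem_primePSF {q r : S} (hq : q ∈ primePSF S) (hr : r ∈ primePSF S) :
    q * r ∈ primePSF S := fun A hA => hA.2.2.1 q (hq A hA) r (hr A hA)

lemma inv_mem_primePSF {q : S} (hq : q ∈ primePSF S) : q⁻¹ ∈ primePSF S :=
  fun A hA => hA.2.2.2 q (hq A hA)

lemma mem_QS_of_mem_primePSF {q : S} (hq : q ∈ primePSF S) : q ∈ QS S := ⟨q, hq, Or.inl rfl⟩

lemma mul_mem_QS (hdist : ∀ a b c : S, a * (b + c) = a * b + a * c)
    {a b : S} (ha : a ∈ QS S) (hb : b ∈ QS S) : a * b ∈ QS S := by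
  obtain ⟨q, hq, haq⟩ := ha
  obtain ⟨r, hr, hbr⟩ := hb
  refine ⟨q * r, mul_mem_primePSF hq hr, (haq.mul_right hdist b).trans ?_⟩
  simpa only [mul_comm q] using hbr.mul_right hdist q

lemma add_right_mul_inv_mem_QS (hdist : ∀ a b c : S, a * (b + c) = a * b + a * c)
    {x y : S} (h : x * y⁻¹ ∈ QS S) (a : S) : (x + a) * (y + a)⁻¹ ∈ QS S := by
  obtain ⟨q, hq, hle⟩ := h
  have hexpand : (q + 1) * (y + a) = (q * y + a) + (q * a + y) := by
    rw [mul_comm, hdist, mul_one, mul_comm, hdist]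
    ac_rfl
  have hxa : psfLe (x + a) ((q + 1) * (y + a)) := by
    rw [hexpand]
    exact ((psfLe_mul_of_mul_inv_psfLe hdist hle).add_right a).trans (psfLe_add_self _ _)
  refine ⟨q + 1, add_mem_primePSF hq one_mem_primePSF, ?_⟩
  simpa using hxa.mul_right hdist (y + a)⁻¹

lemma map_eq_one_of_mem_primePSF {T : Type*} [AddCommSemigroup T] [CommGroup T]
    (hid : ∀ t : T, t + t = t) (φ : S → T) (hadd : ∀ a b : S, φ (a + b) = φ a + φ b)
    (hmul : ∀ a b : S, φ (a * b) = φ a * φ b) {q : S} (hq : q ∈ primePSF S) : φ q = 1 := by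
  let f : S →* T := MonoidHom.mk' φ hmul
  refine hq {s | φ s = 1} ⟨⟨1, map_one f⟩, ?_, ?_, ?_⟩
  · exact fun a (ha : φ a = 1) b (hb : φ b = 1) => show φ (a + b) = 1 by rw [hadd, ha, hb, hid]
  · exact fun a (ha : φ a = 1) b (hb : φ b = 1) => show φ (a * b) = 1 by rw [hmul, ha, hb, mul_one]
  · exact fun a (ha : φ a = 1) => (map_inv f a).trans (inv_eq_one.mpr ha)

end Prime

section Relation

variable {S : Type*} [AddCommSemigroup S] [CommGroup S]

lemma psfRel_of_mul_inv_mem_primePSF {x y : S} (h : x * y⁻¹ ∈ primePSF S) : psfRel x y :=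
  ⟨mem_QS_of_mem_primePSF h, by simpa using mem_QS_of_mem_primePSF (inv_mem_primePSF h)⟩

lemma psfRel_equivalence (hdist : ∀ a b c : S, a * (b + c) = a * b + a * c) :
    Equivalence (psfRel (S := S)) where
  refl x := psfRel_of_mul_inv_mem_primePSF (by simpa using one_mem_primePSF)
  symm h := ⟨h.2, h.1⟩
  trans {x y z} hxy hyz := by
    constructor
    · simpa [mul_assoc] using mul_mem_QS hdist hxy.1 hyz.1
    · simpa [mul_assoc] using mul_mem_QS hdist hyz.2 hxy.2

lemma psfRel.add_right (hdist : ∀ a b c : S, a * (b + c) = a * b + a * c)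
    {x y : S} (h : psfRel x y) (a : S) : psfRel (x + a) (y + a) :=
  ⟨add_right_mul_inv_mem_QS hdist h.1 a, add_right_mul_inv_mem_QS hdist h.2 a⟩

lemma psfRel.mul_right {x y : S} (h : psfRel x y) (a : S) : psfRel (x * a) (y * a) := by
  simpa [psfRel, mul_inv_rev, mul_assoc, mul_left_comm] using h

lemma psfRel_add_self (hdist : ∀ a b c : S, a * (b + c) = a * b + a * c) (x : S) :
    psfRel (x + x) x := by
  apply psfRel_of_mul_inv_mem_primePSF
  rw [← mul_one x, ← hdist, mul_one, mul_comm, inv_mul_cancel_left]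
  exact add_mem_primePSF one_mem_primePSF one_mem_primePSF

lemma psfRel.map_eq {T : Type*} [AddCommSemigroup T] [CommGroup T]
    (hdT : ∀ a b c : T, a * (b + c) = a * b + a * c) (hid : ∀ t : T, t + t = t)
    (φ : S → T) (hadd : ∀ a b : S, φ (a + b) = φ a + φ b) (hmul : ∀ a b : S, φ (a * b) = φ a * φ b)
    {x y : S} (h : psfRel x y) : φ x = φ y := by
  let f : S →* T := MonoidHom.mk' φ hmul
  have hle : ∀ {a b : S}, a * b⁻¹ ∈ QS S → psfLe (φ a) (φ b) := by
    rintro a b ⟨q, hq, hab⟩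
    have hratio : φ (a * b⁻¹) = φ a * (φ b)⁻¹ := by
      rw [hmul]
      exact congrArg (φ a * ·) (map_inv f b)
    have hφ : psfLe (φ a * (φ b)⁻¹) 1 := by
      rw [← hratio, ← map_eq_one_of_mem_primePSF hid φ hadd hmul hq]
      exact hab.map hadd
    simpa using psfLe_mul_of_mul_inv_psfLe hdT hφ
  exact (hle h.1).antisymm_of_idem hid (hle h.2)

end Relation

/-- `∼` is a semiring congruence on the parasemifield `S`, the quotient `S/∼` is
additively idempotent, and every semiring homomorphism from `S` to an additively idempotent
parasemifield factors through `S/∼`. -/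
theorem psfRel_congruence {S : Type*} [AddCommSemigroup S] [CommGroup S]
    (hdist : ∀ a b c : S, a * (b + c) = a * b + a * c) :
    Equivalence (psfRel (S := S)) ∧
    (∀ x y a : S, psfRel x y → psfRel (x + a) (y + a)) ∧
    (∀ x y a : S, psfRel x y → psfRel (x * a) (y * a)) ∧
    (∀ x : S, psfRel (x + x) x) ∧
    (∀ (T : Type) [AddCommSemigroup T] [CommGroup T],
      (∀ a b c : T, a * (b + c) = a * b + a * c) →
      (∀ t : T, t + t = t) →
      ∀ φ : S → T, (∀ a b : S, φ (a + b) = φ a + φ b) →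
        (∀ a b : S, φ (a * b) = φ a * φ b) →
        ∀ x y : S, psfRel x y → φ x = φ y) :=
  ⟨psfRel_equivalence hdist, fun _ _ a h => h.add_right hdist a, fun _ _ a h => h.mul_right a,
    psfRel_add_self hdist, fun _ _ _ hdT hid φ hadd hmul _ _ h => h.map_eq hdT hid φ hadd hmul⟩
end

section
/- A commutative parasemifield S is additively idempotent if and only if the Grothendieck ring G(Q_S) is the trivial (zero) ring, where Q_S = {a ∈ S : ∃ q in the prime subparasemifield A, a ≤ q}. -/
section Aux

variable {S : Type*} [AddCommSemigroup S] [CommGroup S]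

/-- `n+1` copies of `a`. -/
def sm : ℕ → S → S
  | 0, a => a
  | n+1, a => a + sm n a

set_option linter.unusedSectionVars false in
lemma sm_succ (n : ℕ) (a : S) : sm (n+1) a = a + sm n a := rfl

lemma sm_add_sm (n m : ℕ) (a : S) : sm n a + sm m a = sm (n + m + 1) a := by
  induction n with
  | zero =>
      have : (0 + m + 1) = m + 1 := by omega
      rw [this, sm_succ]; rfl
  | succ k ih =>
      have : (k + 1 + m + 1) = (k + m + 1) + 1 := by omega
      rw [this, sm_succ, sm_succ, add_assoc, ih]

lemma sm_add (n : ℕ) (a b : S) : sm n (a + b) = sm n a + sm n b := by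
  induction n with
  | zero => rfl
  | succ k ih =>
      rw [sm_succ, sm_succ, sm_succ, ih]
      rw [add_assoc, add_assoc]
      congr 1
      rw [← add_assoc, ← add_assoc, add_comm b (sm k a)]

lemma sm_mul (hdist : ∀ a b c : S, a * (b + c) = a * b + a * c)
    (n : ℕ) (a b : S) : sm n a * b = sm n (a * b) := by
  induction n with
  | zero => rfl
  | succ k ih =>
      rw [sm_succ, sm_succ, ← ih, mul_comm _ b, hdist, mul_comm b, mul_comm b]

lemma sm_sm (n m : ℕ) (a : S) : sm n (sm m a) = sm (n * m + n + m) a := by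
  induction n with
  | zero =>
      have : (0 * m + 0 + m) = m := by omega
      rw [this]; rfl
  | succ k ih =>
      rw [sm_succ, ih, sm_add_sm]
      congr 1
      ring

lemma add_mem_primePSF_s17 {a b : S} (ha : a ∈ primePSF S) (hb : b ∈ primePSF S) :
    a + b ∈ primePSF S := by
  refine Set.mem_sInter.mpr fun A hA => ?_
  exact hA.2.1 a (Set.mem_sInter.mp ha A hA) b (Set.mem_sInter.mp hb A hA)

lemma one_mem_QS : (1 : S) ∈ QS S := ⟨1, one_mem_primePSF, Or.inl rfl⟩

lemma two_mem_QS : (1 : S) + 1 ∈ QS S :=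
  ⟨1 + 1, add_mem_primePSF_s17 one_mem_primePSF one_mem_primePSF, Or.inl rfl⟩

lemma add_mem_QS {a b : S} (ha : a ∈ QS S) (hb : b ∈ QS S) : a + b ∈ QS S := by
  obtain ⟨q, hq, hle⟩ := ha
  obtain ⟨q', hq', hle'⟩ := hb
  refine ⟨q + q', add_mem_primePSF_s17 hq hq', ?_⟩
  rcases hle with rfl | ⟨c, hc⟩ <;> rcases hle' with rfl | ⟨c', hc'⟩
  · exact Or.inl rfl
  · exact Or.inr ⟨c', by rw [add_assoc, hc']⟩
  · exact Or.inr ⟨c, by rw [add_comm a b, add_assoc, hc, add_comm b q]⟩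
  · exact Or.inr ⟨c + c', by
      rw [add_assoc, ← add_assoc b c c', add_comm b c, add_assoc, hc',
        ← add_assoc, hc]⟩

/-- The key subparasemifield `D = {a | ∃ m n, sm n a = sm m 1}`. -/
lemma isSubPSF_D (hdist : ∀ a b c : S, a * (b + c) = a * b + a * c) :
    IsSubPSF {a : S | ∃ m n : ℕ, sm n a = sm m 1} := by
  refine ⟨⟨1, 0, 0, rfl⟩, ?_, ?_, ?_⟩
  · rintro a ⟨m, n, hn⟩ b ⟨m', n', hn'⟩
    refine ⟨(n' * m + n' + m) + (n * m' + n + m') + 1, n' * n + n' + n, ?_⟩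
    have h1 : sm (n' * n + n' + n) a = sm (n' * m + n' + m) 1 := by
      rw [← sm_sm, hn, sm_sm]
    have h2 : sm (n' * n + n' + n) b = sm (n * m' + n + m') 1 := by
      have : (n' * n + n' + n) = (n * n' + n + n') := by ring
      rw [this, ← sm_sm, hn', sm_sm]
    rw [sm_add, h1, h2, sm_add_sm]
  · rintro a ⟨m, n, hn⟩ b ⟨m', n', hn'⟩
    refine ⟨m * m' + m + m', n * n' + n + n', ?_⟩
    have l : sm n a * sm n' b = sm (n * n' + n + n') (a * b) := by
      rw [sm_mul hdist, mul_comm a (sm n' b), sm_mul hdist, mul_comm b a, sm_sm]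
    have rr : sm m (1:S) * sm m' (1:S) = sm (m * m' + m + m') (1:S) := by
      rw [sm_mul hdist, one_mul, sm_sm]
    rw [← l, ← rr, hn, hn']
  · rintro a ⟨m, n, hn⟩
    refine ⟨n, m, ?_⟩
    have : sm n a * a⁻¹ = sm m 1 * a⁻¹ := by rw [hn]
    rw [sm_mul hdist, sm_mul hdist, mul_inv_cancel, one_mul] at this
    exact this.symm

end Aux

/-- A parasemifield `S` is additively idempotent iff the Grothendieck ring `G(Q_S)` is
trivial, i.e., iff any two pairs of elements of `Q_S` are Grothendieck-congruent. -/
theorem addIdempotent_iff_grothendieck_trivial {S : Type*} [AddCommSemigroup S] [CommGroup S]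
    (hdist : ∀ a b c : S, a * (b + c) = a * b + a * c) :
    (∀ x : S, x + x = x) ↔
      (∀ x y x' y' : S, x ∈ QS S → y ∈ QS S → x' ∈ QS S → y' ∈ QS S →
        ∃ t ∈ QS S, x + y' + t = x' + y + t) := by
  constructor
  · intro h x y x' y' hx hy hx' hy'
    refine ⟨(x + y') + (x' + y), add_mem_QS (add_mem_QS hx hy') (add_mem_QS hx' hy), ?_⟩
    have l1 : ∀ a b : S, a + (a + b) = a + b := fun a b => by rw [← add_assoc, h]
    rw [l1, add_comm (x + y') (x' + y), l1, add_comm (x' + y) (x + y')]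
  · intro h
    obtain ⟨t, ht, heq⟩ := h (1 + 1) 1 1 1 two_mem_QS one_mem_QS one_mem_QS one_mem_QS
    -- heq : (1+1) + 1 + t = 1 + 1 + t
    have hw1 : (1 : S) + (1 + 1 + t) = 1 + 1 + t := by
      have e : (1 : S) + (1 + 1 + t) = 1 + 1 + 1 + t := by ac_rfl
      rw [e]; exact heq
    -- find r ∈ primePSF with 1 + r = r
    obtain ⟨q, hq, hle⟩ := ht
    have hr2 : ∃ r ∈ primePSF S, (1 : S) + r = r := by
      refine ⟨(1 : S) + 1 + q, add_mem_primePSF_s17 (add_mem_primePSF_s17 one_mem_primePSF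
        one_mem_primePSF) hq, ?_⟩
      rcases hle with rfl | ⟨c, hc⟩
      · exact hw1
      · calc (1:S) + (1 + 1 + q) = (1 + (1 + 1 + t)) + c := by rw [← hc]; ac_rfl
            _ = (1 + 1 + t) + c := by rw [hw1]
            _ = 1 + 1 + q := by rw [add_assoc, hc]
    obtain ⟨r, hr, hr1⟩ := hr2
    -- iterate: sm k 1 + r = r
    have hrk : ∀ k : ℕ, sm k 1 + r = r := by
      intro k
      induction k with
      | zero => exact hr1
      | succ j ih => rw [sm_succ, add_assoc, ih, hr1]
    -- r ∈ D
    obtain ⟨m, n, hmn⟩ : ∃ m n : ℕ, sm n r = sm m (1 : S) :=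
      Set.mem_sInter.mp hr _ (isSubPSF_D hdist)
    -- sm n r absorbs sm m 1
    have habs : ∀ n' : ℕ, sm n' r + sm m (1:S) = sm n' r := by
      intro n'
      induction n' with
      | zero => show r + sm m (1:S) = r; rw [add_comm]; exact hrk m
      | succ j ih => rw [sm_succ, add_assoc, ih]
    have hz : sm m (1:S) + sm m (1:S) = sm m (1:S) := by
      calc sm m (1:S) + sm m (1:S) = sm n r + sm m (1:S) := by rw [hmn]
        _ = sm n r := habs n
        _ = sm m (1:S) := hmn
    -- 1 + 1 = 1
    have h11 : (1 : S) + 1 = 1 := by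
      calc (1:S) + 1 = (sm m (1:S))⁻¹ * sm m (1:S) + (sm m (1:S))⁻¹ * sm m (1:S) := by
            rw [inv_mul_cancel]
        _ = (sm m (1:S))⁻¹ * (sm m (1:S) + sm m (1:S)) := (hdist _ _ _).symm
        _ = (sm m (1:S))⁻¹ * sm m (1:S) := by rw [hz]
        _ = 1 := inv_mul_cancel _
    intro x
    have := hdist x 1 1
    rw [mul_one, h11, mul_one] at this
    exact this.symm
end

section
/- Let R be a finitely generated commutative ring and a ∈ R an element such that for every m ≥ 1 there exists b ∈ R with a = m·b (a is additively divisible). Then a = 0. -/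
/-!
If `a ≠ 0`, its annihilator lies in some maximal ideal `m`. The residue field `R ⧸ m` is a field
of finite type over `ℤ`, hence finite over `ℤ` by the Nullstellensatz for the Jacobson ring `ℤ`,
so it has positive characteristic `n`. Divisibility by every `n ^ i` puts `a` in every `m ^ i`,
and Krull's intersection theorem then produces `r ∈ m` with `(1 - r) a = 0`, i.e. `1 - r ∈ m`.
-/

theorem isJacobsonRing_of_jacobson_bot_eq_bot {R : Type*} [CommRing R] [IsDomain R]
    [IsPrincipalIdealRing R] (h : (⊥ : Ideal R).jacobson = ⊥) : IsJacobsonRing R := by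
  refine isJacobsonRing_iff_prime_eq.mpr fun P hP => ?_
  rcases eq_or_ne P ⊥ with rfl | hP_ne_bot
  · exact h
  · have := IsPrime.to_maximal_ideal hP_ne_bot
    exact Ideal.jacobson_eq_self_of_isMaximal

theorem Int.jacobson_bot : (⊥ : Ideal ℤ).jacobson = ⊥ := by
  refine le_antisymm (fun x hx => ?_) Ideal.le_jacobson
  rw [Ideal.mem_jacobson_bot] at hx
  have h_succ := Int.isUnit_iff.mp (hx 1)
  have h_pred := Int.isUnit_iff.mp (hx (-1))
  rw [Ideal.mem_bot]
  omega

instance Int.isJacobsonRing : IsJacobsonRing ℤ :=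
  isJacobsonRing_of_jacobson_bot_eq_bot Int.jacobson_bot

theorem ringChar_ne_zero_of_finiteType_int (K : Type*) [Field K] [Algebra ℤ K]
    [Algebra.FiniteType ℤ K] : ringChar K ≠ 0 := by
  intro h
  have : CharZero K := (CharP.ringChar_zero_iff_CharZero K).mp h
  have := finite_of_finite_type_of_isJacobsonRing ℤ K
  have := Algebra.IsIntegral.of_finite ℤ K
  exact Int.not_isField
    ((Algebra.IsIntegral.isField_iff_isField (RingHom.injective_int _)).mpr (Field.toIsField K))

theorem Ideal.IsMaximal.exists_natCast_mem {R : Type*} [CommRing R] [Algebra.FiniteType ℤ R]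
    {m : Ideal R} (hm : m.IsMaximal) : ∃ n : ℕ, n ≠ 0 ∧ (n : R) ∈ m := by
  let := Ideal.Quotient.field m
  refine ⟨ringChar (R ⧸ m), ringChar_ne_zero_of_finiteType_int (R ⧸ m), ?_⟩
  rw [← Ideal.Quotient.eq_zero_iff_mem, map_natCast]
  exact ringChar.Nat.cast_ringChar

theorem eq_zero_of_forall_isMaximal_mem_pow {R : Type*} [CommRing R] [IsNoetherianRing R]
    {a : R} (h : ∀ m : Ideal R, m.IsMaximal → ∀ i : ℕ, a ∈ m ^ i) : a = 0 := by
  by_contra ha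
  have h_ann_ne_top : (R ∙ a).annihilator ≠ ⊤ := fun h_top => ha <| by
    have h_one : (1 : R) ∈ (R ∙ a).annihilator := h_top ▸ Submodule.mem_top
    rwa [Submodule.mem_annihilator_span_singleton, one_smul] at h_one
  obtain ⟨m, hm, h_ann_le⟩ := Ideal.exists_le_maximal _ h_ann_ne_top
  have ha_mem : a ∈ (⨅ i : ℕ, m ^ i • ⊤ : Submodule R R) := by
    simpa [Submodule.mem_iInf] using h m hm
  -- Krull's intersection theorem
  obtain ⟨r, hr⟩ := (m.mem_iInf_smul_pow_eq_bot_iff a).mp ha_mem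
  have h_one_sub : 1 - (r : R) ∈ m := h_ann_le <| by
    rw [Submodule.mem_annihilator_span_singleton, sub_smul, one_smul, hr, sub_self]
  exact hm.ne_top <| (Ideal.eq_top_iff_one m).mpr <| by
    simpa using m.add_mem h_one_sub r.2

/-- In a finitely generated commutative ring, every additively divisible element is zero. -/
theorem additively_divisible_eq_zero {R : Type*} [CommRing R]
    (hfg : ∃ s : Finset R, Algebra.adjoin ℤ (s : Set R) = ⊤)
    (a : R) (hdiv : ∀ m : ℕ, 1 ≤ m → ∃ b : R, a = m • b) : a = 0 := by
  have : Algebra.FiniteType ℤ R := ⟨hfg⟩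
  have : IsNoetherianRing R := Algebra.FiniteType.isNoetherianRing ℤ R
  refine eq_zero_of_forall_isMaximal_mem_pow fun m hm i => ?_
  obtain ⟨n, hn, hn_mem⟩ := hm.exists_natCast_mem
  obtain ⟨b, rfl⟩ := hdiv (n ^ i) (Nat.one_le_pow _ _ (Nat.pos_of_ne_zero hn))
  rw [nsmul_eq_mul, Nat.cast_pow]
  exact Ideal.mul_mem_right b _ (Ideal.pow_mem_pow hn_mem i)
end
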